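/- The Perron–Frobenius operator P preserves the set C₁: if f ∈ C₀ is such that x ↦ x^d f(x) is increasing on (0,1/2] and x ↦ (x−1/2)^d f(x) is increasing on (1/2,1], where d = α_max + 2, then x ↦ x^d (Pf)(x) is increasing on (0,1/2] and x ↦ (x−1/2)^d (Pf)(x) is increasing on (1/2,1]. -/

import Mathlib

open MeasureTheory Set

/-- Left branch of the LSV-type maps: `x ↦ x(1 + 2^α x^α)`. -/
noncomputable def lsvLeft (α x : ℝ) : ℝ := x * (1 + 2 ^ α * x ^ α)

/-- The LSV map `S_α`. -/
noncomputable def lsvMap (α : ℝ) (x : ℝ) : ℝ :=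
  if x ≤ 1 / 2 then lsvLeft α x else 2 * x - 1

/-- The map `R_{α,K}`. -/
noncomputable def rMap (α K : ℝ) (x : ℝ) : ℝ :=
  if x ≤ 1 / 2 then lsvLeft α x
  else 1 / 2 + K * (x - 1 / 2) + 2 * (1 - K) * (x - 1 / 2) ^ 2

/-- The Perron–Frobenius operator `P` of the random system, written in terms of
the inverse `y j` of the left branch of `T j`, the inverse `zr r` of the right
branch of `T r` (for `r ∈ SR`), and `z(x) = (x+1)/2`.  Here
`ξ_j(x) = (2 y_j(x))^{α_j}` and `DR_r(u) = K_r + 4(1-K_r)(u - 1/2)`. -/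
noncomputable def PFop {N : ℕ} (SR : Finset (Fin N)) (p α K : Fin N → ℝ)
    (y zr : Fin N → ℝ → ℝ) (f : ℝ → ℝ) (x : ℝ) : ℝ :=
  (∑ j, p j * (f (y j x) / (1 + (α j + 1) * (2 * y j x) ^ (α j))))
    + (∑ j ∈ SRᶜ, p j) * (f ((x + 1) / 2) / 2)
    + if 1 / 2 < x then
        ∑ r ∈ SR, p r * (f (zr r x) / (K r + 4 * (1 - K r) * (zr r x - 1 / 2)))
      else 0

/-- Membership of the set `C₀`: nonnegative, decreasing and continuous on
`(0,1/2]` and on `(1/2,1]`, and Lebesgue integrable. -/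
def memC0 (f : ℝ → ℝ) : Prop :=
  (∀ x ∈ Set.Ioc (0 : ℝ) 1, 0 ≤ f x) ∧
  AntitoneOn f (Set.Ioc (0 : ℝ) (1 / 2)) ∧
  ContinuousOn f (Set.Ioc (0 : ℝ) (1 / 2)) ∧
  AntitoneOn f (Set.Ioc (1 / 2 : ℝ) 1) ∧
  ContinuousOn f (Set.Ioc (1 / 2 : ℝ) 1) ∧
  MeasureTheory.IntegrableOn f (Set.Ioc (0 : ℝ) 1)

/- ---------------------------------------------------------------- -/
/- Auxiliary lemmas -/

lemma monoOn_comp {f : ℝ → ℝ} {g : ℝ → ℝ} {s t : Set ℝ}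
    (hg : MonotoneOn g t) (hf : MonotoneOn f s) (hst : ∀ x ∈ s, f x ∈ t) :
    MonotoneOn (fun x => g (f x)) s :=
  fun a ha b hb hab => hg (hst a ha) (hst b hb) (hf ha hb hab)

lemma monoOn_mul {f g : ℝ → ℝ} {s : Set ℝ} (hf : MonotoneOn f s) (hg : MonotoneOn g s)
    (hf0 : ∀ x ∈ s, 0 ≤ f x) (hg0 : ∀ x ∈ s, 0 ≤ g x) :
    MonotoneOn (fun x => f x * g x) s :=
  fun a ha b hb hab =>
    mul_le_mul (hf ha hb hab) (hg ha hb hab) (hg0 a ha) (hf0 b hb)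

lemma monoOn_const_mul {f : ℝ → ℝ} {s : Set ℝ} {c : ℝ} (hc : 0 ≤ c) (hf : MonotoneOn f s) :
    MonotoneOn (fun x => c * f x) s :=
  fun a ha b hb hab => mul_le_mul_of_nonneg_left (hf ha hb hab) hc

lemma monoOn_add {f g : ℝ → ℝ} {s : Set ℝ} (hf : MonotoneOn f s) (hg : MonotoneOn g s) :
    MonotoneOn (fun x => f x + g x) s :=
  fun a ha b hb hab => add_le_add (hf ha hb hab) (hg ha hb hab)

lemma monoOn_sum {ι : Type*} {s : Finset ι} {g : ι → ℝ → ℝ} {t : Set ℝ}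
    (h : ∀ i ∈ s, MonotoneOn (g i) t) :
    MonotoneOn (fun x => ∑ i ∈ s, g i x) t :=
  fun a ha b hb hab => Finset.sum_le_sum fun i hi => h i hi ha hb hab

/-- Key calculus lemma: `t ↦ (a+t)^d / (a+b t)` is monotone on `[0,∞)`
when `0 < a`, `0 ≤ b ≤ d`, `1 ≤ d`. -/
lemma Gmono (a b d : ℝ) (ha : 0 < a) (hb : 0 ≤ b) (hd1 : 1 ≤ d) (hbd : b ≤ d) :
    MonotoneOn (fun t => (a + t) ^ d / (a + b * t)) (Set.Ici (0:ℝ)) := by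
  have hden : ∀ t : ℝ, 0 ≤ t → 0 < a + b * t := fun t ht => by nlinarith
  have hder : ∀ t : ℝ, 0 ≤ t →
      HasDerivAt (fun t => (a + t) ^ d / (a + b * t))
        ((1 * d * (a + t) ^ (d - 1) * (a + b * t) - (a + t) ^ d * b) / (a + b * t) ^ 2) t := by
    intro t ht
    have hpos : (0:ℝ) < a + t := by linarith
    have h1 : HasDerivAt (fun t : ℝ => a + t) 1 t := (hasDerivAt_id t).const_add a
    have hnum : HasDerivAt (fun t : ℝ => (a + t) ^ d) (1 * d * (a + t) ^ (d - 1)) t :=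
      h1.rpow_const (Or.inl hpos.ne')
    have hden' : HasDerivAt (fun t : ℝ => a + b * t) b t := by
      simpa using ((hasDerivAt_id t).const_mul b).const_add a
    exact hnum.div hden' (hden t ht).ne'
  apply monotoneOn_of_deriv_nonneg (convex_Ici 0)
  · intro t ht
    exact ((hder t ht).continuousAt).continuousWithinAt
  · intro t ht
    rw [interior_Ici] at ht
    exact ((hder t (le_of_lt ht)).differentiableAt).differentiableWithinAt
  · intro t ht
    rw [interior_Ici] at ht
    rw [(hder t (le_of_lt ht)).deriv]
    apply div_nonneg _ (sq_nonneg _)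
    have ht' : (0:ℝ) ≤ t := le_of_lt ht
    have hpos : (0:ℝ) < a + t := by linarith
    have hP : (0:ℝ) ≤ (a + t) ^ (d - 1) := Real.rpow_nonneg hpos.le _
    have hsplit : (a + t) ^ d = (a + t) ^ (d - 1) * (a + t) := by
      rw [← Real.rpow_add_one hpos.ne' (d - 1)]
      norm_num
    rw [hsplit]
    have h2 : (0:ℝ) ≤ d * (a + b * t) - b * (a + t) := by
      nlinarith [mul_nonneg ha.le (sub_nonneg.mpr hbd),
        mul_nonneg (mul_nonneg hb ht') (sub_nonneg.mpr hd1)]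
    nlinarith [mul_nonneg hP h2]

/-- The Perron–Frobenius operator `P` preserves the set `C₁` (Lemma 3.3): if
`f ∈ C₀` and `x ↦ x^d f(x)` is increasing on `(0,1/2]` and
`x ↦ (x-1/2)^d f(x)` is increasing on `(1/2,1]` (with `d = α_max + 2`), then
the same two monotonicity properties hold for `Pf`. -/
theorem PFop_preserves_C1
    (N : ℕ) (hN : 0 < N)
    (α K : Fin N → ℝ) (SR : Finset (Fin N))
    (hSR : SR.Nonempty) (hSS : SRᶜ.Nonempty)
    (hα : ∀ j, 0 < α j)
    (hK : ∀ r ∈ SR, K r ∈ Set.Ioo (0 : ℝ) 1)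
    (p : Fin N → ℝ) (hp : ∀ j, 0 < p j) (hp1 : ∑ j, p j = 1)
    (αmax : ℝ) (hαmax : IsGreatest (Set.range α) αmax)
    (d : ℝ) (hd : d = αmax + 2)
    (y : Fin N → ℝ → ℝ)
    (hy : ∀ j, ∀ x ∈ Set.Icc (0 : ℝ) 1,
      y j x ∈ Set.Icc (0 : ℝ) (1 / 2) ∧ lsvLeft (α j) (y j x) = x)
    (zr : Fin N → ℝ → ℝ)
    (hzr : ∀ r ∈ SR, ∀ x ∈ Set.Ioc (1 / 2 : ℝ) 1,
      zr r x ∈ Set.Ioc (1 / 2 : ℝ) 1 ∧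
        1 / 2 + K r * (zr r x - 1 / 2) + 2 * (1 - K r) * (zr r x - 1 / 2) ^ 2 = x)
    (f : ℝ → ℝ) (hf : memC0 f)
    (hf1 : MonotoneOn (fun x => x ^ d * f x) (Set.Ioc (0 : ℝ) (1 / 2)))
    (hf2 : MonotoneOn (fun x => (x - 1 / 2) ^ d * f x) (Set.Ioc (1 / 2 : ℝ) 1)) :
    MonotoneOn (fun x => x ^ d * PFop SR p α K y zr f x) (Set.Ioc (0 : ℝ) (1 / 2)) ∧
    MonotoneOn (fun x => (x - 1 / 2) ^ d * PFop SR p α K y zr f x)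
      (Set.Ioc (1 / 2 : ℝ) 1) := by
  -- basic facts about `d`
  obtain ⟨j0, hj0⟩ := hαmax.1
  have hαmax0 : 0 < αmax := hj0 ▸ hα j0
  have hαle : ∀ j, α j ≤ αmax := fun j => hαmax.2 ⟨j, rfl⟩
  have hd1 : (1:ℝ) ≤ d := by rw [hd]; linarith
  have hd2 : (2:ℝ) ≤ d := by rw [hd]; linarith
  have hd0' : (0:ℝ) ≤ d := by linarith
  have hf0 := hf.1
  -- facts about the inverse left branches
  have hyfact : ∀ j, ∀ x ∈ Ioc (0:ℝ) 1,
      0 < y j x ∧ y j x ≤ 1/2 ∧ x = y j x * (1 + (2 * y j x) ^ α j) := by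
    intro j x hx
    obtain ⟨hmem, heq⟩ := hy j x ⟨hx.1.le, hx.2⟩
    have h2y : (2 * y j x) ^ α j = 2 ^ α j * (y j x) ^ α j :=
      Real.mul_rpow (by norm_num) hmem.1
    have hpos : 0 < y j x := by
      rcases lt_or_eq_of_le hmem.1 with h | h
      · exact h
      · exfalso
        have hx0 : x = 0 := by
          rw [← heq, ← h]; simp [lsvLeft]
        linarith [hx.1]
    refine ⟨hpos, hmem.2, ?_⟩
    have hl : lsvLeft (α j) (y j x) = y j x * (1 + (2 * y j x) ^ α j) := by
      rw [lsvLeft, h2y]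
    rw [← hl]
    exact heq.symm
  -- the left branch is strictly monotone
  have hlsv : ∀ j, ∀ u v : ℝ, 0 ≤ u → u < v → lsvLeft (α j) u < lsvLeft (α j) v := by
    intro j u v hu huv
    have h1 : u ^ α j ≤ v ^ α j := Real.rpow_le_rpow hu huv.le (hα j).le
    have h2 : u * u ^ α j ≤ v * v ^ α j :=
      mul_le_mul huv.le h1 (Real.rpow_nonneg hu _) (by linarith)
    have h3 : (0:ℝ) < 2 ^ α j := Real.rpow_pos_of_pos two_pos _
    have h4 := mul_le_mul_of_nonneg_left h2 h3.le
    unfold lsvLeft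
    nlinarith [h4]
  -- the inverse left branches are monotone
  have hymono : ∀ j, MonotoneOn (y j) (Ioc (0:ℝ) 1) := by
    intro j a ha b hb hab
    by_contra hlt
    push_neg at hlt
    have h0 : 0 ≤ y j b := ((hy j b ⟨hb.1.le, hb.2⟩).1).1
    have h := hlsv j _ _ h0 hlt
    rw [(hy j b ⟨hb.1.le, hb.2⟩).2, (hy j a ⟨ha.1.le, ha.2⟩).2] at h
    linarith
  have hmapY : ∀ j, ∀ x ∈ Ioc (0:ℝ) 1, y j x ∈ Ioc (0:ℝ) (1/2) :=
    fun j x hx => ⟨(hyfact j x hx).1, (hyfact j x hx).2.1⟩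
  -- positivity of the denominators of the left-branch terms
  have hDpos : ∀ j, ∀ x : ℝ, 0 ≤ y j x → 0 < 1 + (α j + 1) * (2 * y j x) ^ α j := by
    intro j x hyx
    have h1 : (0:ℝ) ≤ (2 * y j x) ^ α j := Real.rpow_nonneg (by linarith) _
    nlinarith [mul_nonneg (show (0:ℝ) ≤ α j + 1 by linarith [hα j]) h1]
  -- facts about the inverse right branches
  have hzfact : ∀ r ∈ SR, ∀ x ∈ Ioc (1/2:ℝ) 1,
      1/2 < zr r x ∧ zr r x ≤ 1 ∧
        x - 1/2 = (zr r x - 1/2) * (K r + 2 * (1 - K r) * (zr r x - 1/2)) := by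
    intro r hr x hx
    obtain ⟨hmem, heq⟩ := hzr r hr x hx
    exact ⟨hmem.1, hmem.2, by linear_combination -heq⟩
  have hzmono : ∀ r ∈ SR, MonotoneOn (zr r) (Ioc (1/2:ℝ) 1) := by
    intro r hr a ha b hb hab
    by_contra hlt
    push_neg at hlt
    obtain ⟨hma, heqa⟩ := hzr r hr a ha
    obtain ⟨hmb, heqb⟩ := hzr r hr b hb
    have hK0 := (hK r hr).1
    have hK1 := (hK r hr).2
    have h5 : (0:ℝ) < zr r a - zr r b := by linarith
    nlinarith [heqa, heqb, mul_pos hK0 h5,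
      mul_pos (mul_pos (show (0:ℝ) < 1 - K r by linarith) h5)
        (show (0:ℝ) < (zr r a - 1/2) + (zr r b - 1/2) by linarith [hma.1, hmb.1])]
  -- monotonicity of the left-branch terms (on all of (0,1])
  have hA : ∀ j, MonotoneOn
      (fun x => x ^ d * (f (y j x) / (1 + (α j + 1) * (2 * y j x) ^ α j)))
      (Ioc (0:ℝ) 1) := by
    intro j
    have hF1 : MonotoneOn (fun x => (y j x) ^ d * f (y j x)) (Ioc (0:ℝ) 1) :=
      monoOn_comp hf1 (hymono j) (hmapY j)
    have hF1nn : ∀ x ∈ Ioc (0:ℝ) 1, 0 ≤ (y j x) ^ d * f (y j x) := fun x hx =>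
      mul_nonneg (Real.rpow_nonneg (hmapY j x hx).1.le _)
        (hf0 _ ⟨(hmapY j x hx).1, le_trans (hmapY j x hx).2 (by norm_num)⟩)
    have hξ : MonotoneOn (fun x => (2 * y j x) ^ α j) (Ioc (0:ℝ) 1) := by
      intro a ha b hb hab
      have h := hymono j ha hb hab
      exact Real.rpow_le_rpow (by linarith [(hmapY j a ha).1.le]) (by linarith) (hα j).le
    have hG := Gmono 1 (α j + 1) d one_pos (by linarith [hα j]) hd1
      (by rw [hd]; linarith [hαle j])
    have hF2 : MonotoneOn
        (fun x => (1 + (2 * y j x) ^ α j) ^ d / (1 + (α j + 1) * (2 * y j x) ^ α j))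
        (Ioc (0:ℝ) 1) :=
      monoOn_comp hG hξ
        (fun x hx => Real.rpow_nonneg (by linarith [(hmapY j x hx).1.le]) _)
    have hF2nn : ∀ x ∈ Ioc (0:ℝ) 1,
        0 ≤ (1 + (2 * y j x) ^ α j) ^ d / (1 + (α j + 1) * (2 * y j x) ^ α j) := by
      intro x hx
      have h1 : (0:ℝ) ≤ (2 * y j x) ^ α j :=
        Real.rpow_nonneg (by linarith [(hmapY j x hx).1.le]) _
      exact div_nonneg (Real.rpow_nonneg (by linarith) _)
        (hDpos j x (hmapY j x hx).1.le).le
    apply MonotoneOn.congr (monoOn_mul hF1 hF2 hF1nn hF2nn)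
    intro x hx
    obtain ⟨hy0, hy12, hxy⟩ := hyfact j x hx
    have hξnn : (0:ℝ) ≤ (2 * y j x) ^ α j := Real.rpow_nonneg (by linarith) _
    have hxd : x ^ d = (y j x) ^ d * (1 + (2 * y j x) ^ α j) ^ d := by
      conv_lhs => rw [hxy]
      rw [Real.mul_rpow hy0.le (by linarith)]
    simp only
    rw [hxd]
    ring
  -- nonnegativity of the left-branch terms
  have hAnn : ∀ j, ∀ x ∈ Ioc (0:ℝ) 1,
      0 ≤ x ^ d * (f (y j x) / (1 + (α j + 1) * (2 * y j x) ^ α j)) := by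
    intro j x hx
    exact mul_nonneg (Real.rpow_nonneg hx.1.le _)
      (div_nonneg (hf0 _ ⟨(hmapY j x hx).1, le_trans (hmapY j x hx).2 (by norm_num)⟩)
        (hDpos j x (hmapY j x hx).1.le).le)
  -- the ratio function σ
  have hσ : MonotoneOn (fun x : ℝ => ((x - 1/2)/x) ^ d) (Ioc (1/2:ℝ) 1) := by
    intro a ha b hb hab
    have ha0 : (0:ℝ) < a := lt_trans (by norm_num) ha.1
    have hb0 : (0:ℝ) < b := lt_trans (by norm_num) hb.1
    have h1 : (a - 1/2)/a ≤ (b - 1/2)/b := by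
      rw [div_le_div_iff₀ ha0 hb0]
      nlinarith
    exact Real.rpow_le_rpow (div_nonneg (by linarith [ha.1]) ha0.le) h1 hd0'
  have hσnn : ∀ x ∈ Ioc (1/2:ℝ) 1, 0 ≤ ((x - 1/2)/x) ^ d := fun x hx =>
    Real.rpow_nonneg (div_nonneg (by linarith [hx.1]) (by linarith [hx.1])) _
  -- the middle term
  have hB : MonotoneOn (fun x => (x/2) ^ d * f ((x+1)/2)) (Ioc (0:ℝ) 1) := by
    have hw : MonotoneOn (fun x : ℝ => (x+1)/2) (Ioc (0:ℝ) 1) := fun a _ b _ hab => by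
      simp only; linarith
    have hmap : ∀ x ∈ Ioc (0:ℝ) 1, (x+1)/2 ∈ Ioc (1/2:ℝ) 1 := fun x hx =>
      ⟨by linarith [hx.1], by linarith [hx.2]⟩
    apply MonotoneOn.congr (monoOn_comp hf2 hw hmap)
    intro x hx
    simp only
    rw [show (x+1)/2 - 1/2 = x/2 by ring]
  have hBnn : ∀ x ∈ Ioc (0:ℝ) 1, 0 ≤ (x/2) ^ d * f ((x+1)/2) := fun x hx =>
    mul_nonneg (Real.rpow_nonneg (by linarith [hx.1]) _)
      (hf0 _ ⟨by linarith [hx.1], by linarith [hx.2]⟩)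
  have hcnn : (0:ℝ) ≤ ∑ j ∈ SRᶜ, p j := Finset.sum_nonneg fun j _ => (hp j).le
  -- the right-branch terms
  have hC : ∀ r ∈ SR, MonotoneOn
      (fun x => (x - 1/2) ^ d * (f (zr r x) / (K r + 4 * (1 - K r) * (zr r x - 1/2))))
      (Ioc (1/2:ℝ) 1) := by
    intro r hr
    have hK0 := (hK r hr).1
    have hK1 := (hK r hr).2
    have hmapZ : ∀ x ∈ Ioc (1/2:ℝ) 1, zr r x ∈ Ioc (1/2:ℝ) 1 := fun x hx => (hzr r hr x hx).1
    have hG1 : MonotoneOn (fun x => (zr r x - 1/2) ^ d * f (zr r x)) (Ioc (1/2:ℝ) 1) :=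
      monoOn_comp hf2 (hzmono r hr) hmapZ
    have hG1nn : ∀ x ∈ Ioc (1/2:ℝ) 1, 0 ≤ (zr r x - 1/2) ^ d * f (zr r x) := fun x hx =>
      mul_nonneg (Real.rpow_nonneg (by linarith [(hmapZ x hx).1]) _)
        (hf0 _ ⟨by linarith [(hmapZ x hx).1], (hmapZ x hx).2⟩)
    have ht : MonotoneOn (fun x => 2 * (1 - K r) * (zr r x - 1/2)) (Ioc (1/2:ℝ) 1) := by
      intro a ha b hb hab
      have h := hzmono r hr ha hb hab
      have h2 : (0:ℝ) ≤ 1 - K r := by linarith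
      nlinarith [mul_nonneg h2 (show (0:ℝ) ≤ zr r b - zr r a by linarith)]
    have htmaps : ∀ x ∈ Ioc (1/2:ℝ) 1, 2 * (1 - K r) * (zr r x - 1/2) ∈ Ici (0:ℝ) :=
      fun x hx => show (0:ℝ) ≤ 2 * (1 - K r) * (zr r x - 1/2) from
        mul_nonneg (by linarith) (by linarith [(hmapZ x hx).1])
    have hG := Gmono (K r) 2 d hK0 (by norm_num) hd1 hd2
    have hG2 : MonotoneOn
        (fun x => (K r + 2 * (1 - K r) * (zr r x - 1/2)) ^ d
          / (K r + 2 * (2 * (1 - K r) * (zr r x - 1/2)))) (Ioc (1/2:ℝ) 1) :=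
      monoOn_comp hG ht htmaps
    have hG2nn : ∀ x ∈ Ioc (1/2:ℝ) 1,
        0 ≤ (K r + 2 * (1 - K r) * (zr r x - 1/2)) ^ d
          / (K r + 2 * (2 * (1 - K r) * (zr r x - 1/2))) := by
      intro x hx
      have hv0 : (0:ℝ) ≤ zr r x - 1/2 := by linarith [(hmapZ x hx).1]
      have h1 : (0:ℝ) ≤ 2 * (1 - K r) * (zr r x - 1/2) :=
        mul_nonneg (by linarith) hv0
      exact div_nonneg (Real.rpow_nonneg (by linarith) _) (by linarith)
    apply MonotoneOn.congr (monoOn_mul hG1 hG2 hG1nn hG2nn)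
    intro x hx
    obtain ⟨hz1, hz2, hveq⟩ := hzfact r hr x hx
    have hv0 : (0:ℝ) ≤ zr r x - 1/2 := by linarith
    have hfac0 : (0:ℝ) ≤ K r + 2 * (1 - K r) * (zr r x - 1/2) := by nlinarith
    have hxd : (x - 1/2) ^ d
        = (zr r x - 1/2) ^ d * (K r + 2 * (1 - K r) * (zr r x - 1/2)) ^ d := by
      rw [hveq, Real.mul_rpow hv0 hfac0]
    simp only
    rw [show K r + 4 * (1 - K r) * (zr r x - 1/2)
        = K r + 2 * (2 * (1 - K r) * (zr r x - 1/2)) by ring, hxd]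
    ring
  constructor
  · -- first half: on (0, 1/2]
    have hsub : Ioc (0:ℝ) (1/2) ⊆ Ioc (0:ℝ) 1 := Ioc_subset_Ioc_right (by norm_num)
    have hsum : MonotoneOn
        (fun x => ∑ j, p j * (x ^ d * (f (y j x) / (1 + (α j + 1) * (2 * y j x) ^ α j))))
        (Ioc (0:ℝ) (1/2)) :=
      monoOn_sum fun j _ => monoOn_const_mul (hp j).le ((hA j).mono hsub)
    have hb' : MonotoneOn
        (fun x => ((∑ j ∈ SRᶜ, p j) * 2 ^ d / 2) * ((x/2) ^ d * f ((x+1)/2)))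
        (Ioc (0:ℝ) (1/2)) := by
      apply monoOn_const_mul _ (hB.mono hsub)
      have : (0:ℝ) < (2:ℝ) ^ d := Real.rpow_pos_of_pos two_pos _
      positivity
    apply MonotoneOn.congr (monoOn_add hsum hb')
    intro x hx
    have hx2 : ¬ (1/2 : ℝ) < x := not_lt.mpr hx.2
    simp only [PFop]
    rw [if_neg hx2, add_zero, mul_add, Finset.mul_sum]
    have h2d : (2:ℝ) ^ d * (x/2) ^ d = x ^ d := by
      rw [← Real.mul_rpow (by norm_num) (by linarith [hx.1] : (0:ℝ) ≤ x/2),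
        show (2:ℝ) * (x/2) = x by ring]
    congr 1
    · exact Finset.sum_congr rfl fun j _ => by ring
    · rw [← h2d]; ring
  · -- second half: on (1/2, 1]
    have hsub2 : Ioc (1/2:ℝ) 1 ⊆ Ioc (0:ℝ) 1 := Ioc_subset_Ioc_left (by norm_num)
    have hS1 : MonotoneOn
        (fun x => ∑ j, p j * (((x - 1/2)/x) ^ d
          * (x ^ d * (f (y j x) / (1 + (α j + 1) * (2 * y j x) ^ α j)))))
        (Ioc (1/2:ℝ) 1) :=
      monoOn_sum fun j _ => monoOn_const_mul (hp j).le
        (monoOn_mul hσ ((hA j).mono hsub2) hσnn (fun x hx => hAnn j x (hsub2 hx)))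
    have hS2 : MonotoneOn
        (fun x => ((∑ j ∈ SRᶜ, p j) * 2 ^ d / 2)
          * (((x - 1/2)/x) ^ d * ((x/2) ^ d * f ((x+1)/2)))) (Ioc (1/2:ℝ) 1) := by
      apply monoOn_const_mul _
        (monoOn_mul hσ (hB.mono hsub2) hσnn (fun x hx => hBnn x (hsub2 hx)))
      have : (0:ℝ) < (2:ℝ) ^ d := Real.rpow_pos_of_pos two_pos _
      positivity
    have hS3 : MonotoneOn
        (fun x => ∑ r ∈ SR, p r * ((x - 1/2) ^ d
          * (f (zr r x) / (K r + 4 * (1 - K r) * (zr r x - 1/2))))) (Ioc (1/2:ℝ) 1) :=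
      monoOn_sum fun r hr => monoOn_const_mul (hp r).le (hC r hr)
    apply MonotoneOn.congr (monoOn_add (monoOn_add hS1 hS2) hS3)
    intro x hx
    have hx' : (1/2:ℝ) < x := hx.1
    have hx0 : (0:ℝ) < x := by linarith
    simp only [PFop]
    rw [if_pos hx', mul_add, mul_add, Finset.mul_sum, Finset.mul_sum]
    have hσx : ((x - 1/2)/x) ^ d * x ^ d = (x - 1/2) ^ d := by
      rw [← Real.mul_rpow (div_nonneg (by linarith) hx0.le) hx0.le,
        div_mul_cancel₀ _ hx0.ne']
    have h2d : (2:ℝ) ^ d * (x/2) ^ d = x ^ d := by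
      rw [← Real.mul_rpow (by norm_num) (by linarith : (0:ℝ) ≤ x/2),
        show (2:ℝ) * (x/2) = x by ring]
    congr 1
    · congr 1
      · exact Finset.sum_congr rfl fun j _ => by rw [← hσx]; ring
      · rw [← hσx, ← h2d]; ring
    · exact Finset.sum_congr rfl fun r _ => by ring
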